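/- Let G be a hyperbolic group with finite symmetric generating set S and word length |·|, and let C be a conjugacy class of G. Then exactly one of the following holds: either the set {C^d : d ∈ ℕ} of conjugacy classes is finite (equivalently sup_d |C^d| < ∞), or there exists a constant K > 0 such that |C^d| ≥ K·d for every d ≥ 1, where C^d = {x^d : x ∈ C} and |C'| = min{|x| : x ∈ C'} for a conjugacy class C'. -/

import Mathlib

/-- The word length of `g` with respect to the generating set `S`. -/
noncomputable def wordLength {G : Type*} [Group G] (S : Set G) (g : G) : ℕ :=
  sInf {n | ∃ l : List G, (∀ x ∈ l, x ∈ S) ∧ l.prod = g ∧ l.length = n}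

/-- `|C| = min {|x| : x ∈ C}`, the minimal word length in a conjugacy class `C`. -/
noncomputable def minConjLength {G : Type*} [Group G] (S : Set G) (C : Set G) : ℕ :=
  sInf (wordLength S '' C)

/-- The Gromov product for the word metric on `G` with respect to `S`. -/
noncomputable def wordGromovProd {G : Type*} [Group G] (S : Set G) (x y z : G) : ℝ :=
  ((wordLength S (x⁻¹ * z) : ℝ) + (wordLength S (y⁻¹ * z) : ℝ) - (wordLength S (x⁻¹ * y) : ℝ)) / 2

/-- The word metric of `(G,S)` satisfies the four-point condition with constant `δ`. -/
def FourPointWith {G : Type*} [Group G] (S : Set G) (δ : ℝ) : Prop :=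
  ∀ x y z w : G,
    min (wordGromovProd S x z w) (wordGromovProd S y z w) ≤ wordGromovProd S x y w + δ

/-- `G` is Gromov-hyperbolic with respect to `S`: its word metric satisfies the four-point
condition for some `δ ≥ 0`. -/
def IsHyperbolicWith {G : Type*} [Group G] (S : Set G) : Prop :=
  ∃ δ : ℝ, 0 ≤ δ ∧ FourPointWith S δ

/-!
If some class `C^d₀` with `d₀ ≥ 1` has minimal length `N ≥ 8δ + 2`, let `h` be a shortest element
of it. Splitting a geodesic word for `h` in half, `h = ab`, and using that the conjugate `ba` is no
shorter than `ab`, three applications of the four-point condition give `|h²| ≥ 2N - 6δ`. One more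
shows inductively that each further power adds at least `N - 8δ`, so `|h^k| ≥ k (N - 8δ)`. Such a linear lower bound on the powers of `g` bounds `|y|`
from below for every conjugate `y` of `g`, since conjugation costs only a bounded amount; applied to
`g = h^d` and `y = z^d₀` with `z ∈ C^d` this gives `|C^d| ≥ d (N - 8δ) / d₀`.
Otherwise all `|C^d|` are below `8δ + 2`, so every `C^d` meets a fixed finite ball, and there are
finitely many of them. Finitely many classes have bounded minimal length, so the cases are exclusive.
-/

theorem le_of_forall_nat_mul_le_add {α : Type*} [Field α] [LinearOrder α] [IsStrictOrderedRing α]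
    [Archimedean α] {a b C : α} (h : ∀ n : ℕ, a * n ≤ C + b * n) : a ≤ b := by
  by_contra! hba
  obtain ⟨n, hn⟩ := exists_nat_gt (C / (a - b))
  have := (div_lt_iff₀ (sub_pos.2 hba)).1 hn
  linarith [h n]

section WordLength

variable {G : Type*} [Group G] {S : Set G}

theorem submonoid_closure_eq_top_of_inv_mem (hSsymm : ∀ s ∈ S, s⁻¹ ∈ S)
    (hSgen : Subgroup.closure S = ⊤) : Submonoid.closure S = ⊤ := by
  have hS : S ∪ S⁻¹ = S := Set.union_eq_left.2 fun s hs => inv_inv s ▸ hSsymm _ hs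
  rw [← hS, ← Subgroup.closure_toSubmonoid, hSgen, Subgroup.top_toSubmonoid]

theorem wordLength_prod_le_length {l : List G} (hl : ∀ x ∈ l, x ∈ S) :
    wordLength S l.prod ≤ l.length :=
  Nat.sInf_le ⟨l, hl, rfl, rfl⟩

theorem wordLength_one : wordLength S (1 : G) = 0 :=
  Nat.le_zero.mp (wordLength_prod_le_length (l := []) (by simp))

theorem exists_list_length_eq_wordLength (hS : Submonoid.closure S = ⊤) (g : G) :
    ∃ l : List G, (∀ x ∈ l, x ∈ S) ∧ l.prod = g ∧ l.length = wordLength S g := by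
  obtain ⟨l, hl, rfl⟩ := Submonoid.exists_list_of_mem_closure (hS ▸ Submonoid.mem_top g)
  have hne : {n | ∃ l' : List G, (∀ x ∈ l', x ∈ S) ∧ l'.prod = l.prod ∧ l'.length = n}.Nonempty :=
    ⟨_, l, hl, rfl, rfl⟩
  exact Nat.sInf_mem hne

theorem wordLength_mul_le (hS : Submonoid.closure S = ⊤) (g h : G) :
    wordLength S (g * h) ≤ wordLength S g + wordLength S h := by
  obtain ⟨l₁, hl₁, rfl, hn₁⟩ := exists_list_length_eq_wordLength hS g
  obtain ⟨l₂, hl₂, rfl, hn₂⟩ := exists_list_length_eq_wordLength hS h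
  rw [← hn₁, ← hn₂, ← List.length_append, ← List.prod_append]
  exact wordLength_prod_le_length (List.forall_mem_append.2 ⟨hl₁, hl₂⟩)

theorem wordLength_inv_le (hSsymm : ∀ s ∈ S, s⁻¹ ∈ S) (hS : Submonoid.closure S = ⊤) (g : G) :
    wordLength S g⁻¹ ≤ wordLength S g := by
  obtain ⟨l, hl, rfl, hn⟩ := exists_list_length_eq_wordLength hS g
  rw [← hn, List.prod_inv_reverse]
  refine (wordLength_prod_le_length fun x hx => ?_).trans_eq (by simp)
  obtain ⟨y, hy, rfl⟩ := List.mem_map.1 (List.mem_reverse.1 hx)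
  exact hSsymm y (hl y hy)

theorem wordLength_inv (hSsymm : ∀ s ∈ S, s⁻¹ ∈ S) (hS : Submonoid.closure S = ⊤) (g : G) :
    wordLength S g⁻¹ = wordLength S g :=
  (wordLength_inv_le hSsymm hS g).antisymm (by simpa using wordLength_inv_le hSsymm hS g⁻¹)

theorem wordLength_pow_le (hS : Submonoid.closure S = ⊤) (g : G) (k : ℕ) :
    wordLength S (g ^ k) ≤ k * wordLength S g := by
  induction k with
  | zero => simp [wordLength_one]
  | succ k ih =>
    rw [pow_succ, add_one_mul]
    exact (wordLength_mul_le hS _ _).trans (by omega)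

theorem exists_mul_eq_of_le_wordLength (hS : Submonoid.closure S = ⊤) (g : G) {k : ℕ}
    (hk : k ≤ wordLength S g) :
    ∃ a b, a * b = g ∧ wordLength S a = k ∧ wordLength S b = wordLength S g - k := by
  obtain ⟨l, hl, rfl, hn⟩ := exists_list_length_eq_wordLength hS g
  have ha := wordLength_prod_le_length fun x (hx : x ∈ l.take k) => hl x (List.mem_of_mem_take hx)
  have hb := wordLength_prod_le_length fun x (hx : x ∈ l.drop k) => hl x (List.mem_of_mem_drop hx)
  have hab := wordLength_mul_le hS (l.take k).prod (l.drop k).prod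
  rw [← List.prod_append, List.take_append_drop] at hab
  simp only [List.length_take, List.length_drop] at ha hb
  exact ⟨(l.take k).prod, (l.drop k).prod, by rw [← List.prod_append, List.take_append_drop],
    by omega, by omega⟩

theorem finite_setOf_wordLength_le (hSfin : S.Finite) (hS : Submonoid.closure S = ⊤) (R : ℕ) :
    {g : G | wordLength S g ≤ R}.Finite := by
  have : Finite S := hSfin.to_subtype
  refine ((List.finite_length_le S R).image fun l => (l.map (↑)).prod).subset ?_
  intro g hg
  obtain ⟨l, hl, rfl, hn⟩ := exists_list_length_eq_wordLength hS g
  obtain ⟨l', rfl⟩ : l ∈ Set.range (List.map ((↑) : S → G)) := by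
    rwa [Set.range_list_map_coe]
  rw [List.length_map] at hn
  exact ⟨l', (le_of_eq hn).trans hg, rfl⟩

theorem le_wordLength_of_isConj (hSsymm : ∀ s ∈ S, s⁻¹ ∈ S) (hS : Submonoid.closure S = ⊤)
    {g y : G} {c : ℝ} (hc : ∀ k : ℕ, c * k ≤ wordLength S (g ^ k)) (hgy : IsConj g y) :
    c ≤ wordLength S y := by
  obtain ⟨u, rfl⟩ := isConj_iff.mp hgy.symm
  refine le_of_forall_nat_mul_le_add (C := 2 * wordLength S u) fun k => (hc k).trans ?_
  have h₁ := wordLength_mul_le hS (u * y ^ k) u⁻¹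
  have h₂ := wordLength_mul_le hS u (y ^ k)
  have h₃ := mul_comm k _ ▸ wordLength_pow_le hS y k
  rw [wordLength_inv hSsymm hS] at h₁
  rw [conj_pow]
  exact_mod_cast (by omega : wordLength S (u * y ^ k * u⁻¹) ≤ 2 * wordLength S u + wordLength S y * k)

end WordLength

section ConjClass

variable {G : Type*} [Group G] {S : Set G}

theorem minConjLength_le {a y : G} (hy : IsConj a y) :
    minConjLength S {y | IsConj a y} ≤ wordLength S y :=
  Nat.sInf_le ⟨y, hy, rfl⟩

theorem exists_isConj_wordLength_eq_minConjLength (S : Set G) (a : G) :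
    ∃ g, IsConj a g ∧ wordLength S g = minConjLength S {y | IsConj a y} :=
  Nat.sInf_mem (Set.Nonempty.image _ ⟨a, IsConj.refl a⟩)

theorem finite_conjClasses_of_minConjLength_le (hSfin : S.Finite)
    (hS : Submonoid.closure S = ⊤) {ι : Type*} {a : ι → G} {R : ℕ}
    (hR : ∀ i, minConjLength S {y | IsConj (a i) y} ≤ R) :
    {D : Set G | ∃ i, D = {y | IsConj (a i) y}}.Finite := by
  refine ((finite_setOf_wordLength_le hSfin hS R).image fun g => {y | IsConj g y}).subset ?_
  rintro _ ⟨i, rfl⟩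
  obtain ⟨g, hag, hg⟩ := exists_isConj_wordLength_eq_minConjLength S (a i)
  refine ⟨g, (le_of_eq hg).trans (hR i), ?_⟩
  ext y
  exact ⟨hag.trans, hag.symm.trans⟩

theorem exists_minConjLength_le_of_finite {ι : Type*} {a : ι → G}
    (hfin : {D : Set G | ∃ i, D = {y | IsConj (a i) y}}.Finite) :
    ∃ R, ∀ i, minConjLength S {y | IsConj (a i) y} ≤ R := by
  obtain ⟨R, hR⟩ := (hfin.image (minConjLength S)).bddAbove
  exact ⟨R, fun i => hR ⟨_, ⟨i, rfl⟩, rfl⟩⟩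

theorem not_linear_minConjLength_pow_of_finite {x : G}
    (hfin : {D : Set G | ∃ d : ℕ, D = {y | IsConj (x ^ d) y}}.Finite) :
    ¬ ∃ K : ℝ, 0 < K ∧ ∀ d : ℕ, 1 ≤ d → K * d ≤ minConjLength S {y | IsConj (x ^ d) y} := by
  rintro ⟨K, hK, hlin⟩
  obtain ⟨R, hR⟩ := exists_minConjLength_le_of_finite (S := S) hfin
  obtain ⟨d, hd⟩ := exists_nat_gt (R / K)
  have hd₁ : 0 < d := Nat.cast_pos.1 ((by positivity : (0 : ℝ) ≤ R / K).trans_lt hd)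
  have := (div_lt_iff₀' hK).1 hd
  have : (minConjLength S {y | IsConj (x ^ d) y} : ℝ) ≤ R := by exact_mod_cast hR d
  linarith [hlin d hd₁]

end ConjClass

namespace FourPointWith

variable {G : Type*} [Group G] {S : Set G} {δ : ℝ}

theorem min_le (hfp : FourPointWith S δ) (hSsymm : ∀ s ∈ S, s⁻¹ ∈ S)
    (hS : Submonoid.closure S = ⊤) (x y z : G) :
    min ((wordLength S x : ℝ) + wordLength S z - wordLength S (x⁻¹ * z))
        ((wordLength S y : ℝ) + wordLength S z - wordLength S (y⁻¹ * z)) ≤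
      (wordLength S x : ℝ) + wordLength S y - wordLength S (x⁻¹ * y) + 2 * δ := by
  have h := hfp x y z 1
  simp only [wordGromovProd, mul_one, wordLength_inv hSsymm hS] at h
  rw [min_div_div_right zero_le_two] at h
  linarith

theorem le_wordLength_mul_mul (hfp : FourPointWith S δ) (hSsymm : ∀ s ∈ S, s⁻¹ ∈ S)
    (hS : Submonoid.closure S = ⊤) {a b : G}
    (hab : wordLength S a + wordLength S b ≤ wordLength S (a * b))
    (hba : wordLength S a + wordLength S b ≤ wordLength S (b * a))
    (hb : δ < wordLength S b) :
    (wordLength S a : ℝ) + wordLength S (b * a) - 2 * δ ≤ wordLength S (a * b * a) := by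
  -- the four-point condition at base `a` for the points `1, ab, aba`, translated by `a⁻¹`
  have h := hfp.min_le hSsymm hS a⁻¹ b (b * a)
  simp only [inv_inv, inv_mul_cancel_left, wordLength_inv hSsymm hS] at h
  rw [← mul_assoc] at h
  have hab' : (wordLength S a : ℝ) + wordLength S b ≤ wordLength S (a * b) := by exact_mod_cast hab
  have hba' : (wordLength S a : ℝ) + wordLength S b ≤ wordLength S (b * a) := by exact_mod_cast hba
  rcases min_le_iff.mp h with h | h <;> linarith

theorem two_mul_sub_le_wordLength_mul_self_of_split (hfp : FourPointWith S δ)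
    (hSsymm : ∀ s ∈ S, s⁻¹ ∈ S) (hS : Submonoid.closure S = ⊤) {a b : G}
    (hab : wordLength S a + wordLength S b = wordLength S (a * b))
    (hmin : wordLength S (a * b) ≤ wordLength S (b * a))
    (ha : δ < wordLength S a) (hb : δ < wordLength S b) (hlong : 3 * δ < wordLength S (a * b)) :
    2 * (wordLength S (a * b) : ℝ) - 6 * δ ≤ wordLength S (a * b * (a * b)) := by
  have haba := hfp.le_wordLength_mul_mul hSsymm hS hab.le (hab ▸ hmin) hb
  have hbab := hfp.le_wordLength_mul_mul hSsymm hS (a := b) (b := a) (by omega) (by omega) ha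
  -- the four-point condition at base `aba` for the points `abab, a, 1`
  have h := hfp.min_le hSsymm hS b (b * a)⁻¹ (a * b * a)⁻¹
  rw [show b⁻¹ * (a * b * a)⁻¹ = (a * b * (a * b))⁻¹ by group,
    show (b * a)⁻¹⁻¹ * (a * b * a)⁻¹ = a⁻¹ by group,
    show b⁻¹ * (b * a)⁻¹ = (b * a * b)⁻¹ by group] at h
  simp only [wordLength_inv hSsymm hS] at h
  have hab' : (wordLength S a : ℝ) + wordLength S b = wordLength S (a * b) := by exact_mod_cast hab
  have hmin' : (wordLength S (a * b) : ℝ) ≤ wordLength S (b * a) := by exact_mod_cast hmin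
  rcases min_le_iff.mp h with h | h <;> linarith

theorem two_mul_sub_le_wordLength_mul_self (hfp : FourPointWith S δ)
    (hSsymm : ∀ s ∈ S, s⁻¹ ∈ S) (hS : Submonoid.closure S = ⊤) {h : G}
    (hmin : ∀ y, IsConj h y → wordLength S h ≤ wordLength S y)
    (hlong : 3 * δ + 1 < wordLength S h) :
    2 * (wordLength S h : ℝ) - 6 * δ ≤ wordLength S (h * h) := by
  obtain ⟨a, b, rfl, ha, hb⟩ :=
    exists_mul_eq_of_le_wordLength hS h (Nat.div_le_self (wordLength S h) 2)
  have hsplit : wordLength S a + wordLength S b = wordLength S (a * b) := by omega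
  have hhalf : (wordLength S (a * b) : ℝ) ≤ 2 * wordLength S a + 1 := by
    exact_mod_cast (by omega : wordLength S (a * b) ≤ 2 * wordLength S a + 1)
  have hab : (wordLength S a : ℝ) ≤ wordLength S b := by
    exact_mod_cast (by omega : wordLength S a ≤ wordLength S b)
  have hsplit' : (wordLength S a : ℝ) + wordLength S b = wordLength S (a * b) := by
    exact_mod_cast hsplit
  have ha₀ : (0 : ℝ) ≤ wordLength S a := Nat.cast_nonneg _
  exact hfp.two_mul_sub_le_wordLength_mul_self_of_split hSsymm hS hsplit
    (hmin _ (isConj_iff.2 ⟨a⁻¹, by group⟩)) (by linarith) (by linarith) (by linarith)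

theorem mul_le_wordLength_pow (hfp : FourPointWith S δ) (hSsymm : ∀ s ∈ S, s⁻¹ ∈ S)
    (hS : Submonoid.closure S = ⊤) (hδ : 0 ≤ δ) {h : G}
    (hsq : 2 * (wordLength S h : ℝ) - 6 * δ ≤ wordLength S (h * h))
    (hlong : 8 * δ < wordLength S h) (k : ℕ) :
    k * ((wordLength S h : ℝ) - 8 * δ) ≤ wordLength S (h ^ k) := by
  -- `step i` is twice the Gromov product of `1` and `h^(i+1)` at `h`; the four-point condition
  -- at `h` for `1, h², h^(i+2)` propagates the bound
  have step : ∀ i : ℕ,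
      (wordLength S h : ℝ) + wordLength S (h ^ i) - wordLength S (h ^ (i + 1)) ≤ 8 * δ := by
    intro i
    induction i with
    | zero => simp [wordLength_one, hδ]
    | succ i ih =>
      have key := hfp.min_le hSsymm hS h⁻¹ h (h ^ (i + 1))
      rw [inv_inv, ← pow_succ', pow_succ' h i, inv_mul_cancel_left, ← pow_succ'] at key
      simp only [wordLength_inv hSsymm hS] at key
      rcases min_le_iff.mp key with key | key <;> linarith
  induction k with
  | zero => simp
  | succ k ih =>
    push_cast
    linarith [step k]

theorem exists_pos_mul_le_minConjLength_pow (hfp : FourPointWith S δ)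
    (hSsymm : ∀ s ∈ S, s⁻¹ ∈ S) (hS : Submonoid.closure S = ⊤) (hδ : 0 ≤ δ) {x : G} {d₀ : ℕ}
    (hd₀ : 0 < d₀) (hlong : 8 * δ + 2 ≤ minConjLength S {y | IsConj (x ^ d₀) y}) :
    ∃ K : ℝ, 0 < K ∧ ∀ d : ℕ, K * d ≤ minConjLength S {y | IsConj (x ^ d) y} := by
  obtain ⟨h, hxh, hh⟩ := exists_isConj_wordLength_eq_minConjLength S (x ^ d₀)
  have hmin (y : G) (hy : IsConj h y) : wordLength S h ≤ wordLength S y :=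
    hh ▸ minConjLength_le (hxh.trans hy)
  rw [← hh] at hlong
  have hpow := hfp.mul_le_wordLength_pow hSsymm hS hδ
    (hfp.two_mul_sub_le_wordLength_mul_self hSsymm hS hmin (by linarith)) (by linarith)
  refine ⟨((wordLength S h : ℝ) - 8 * δ) / d₀, div_pos (by linarith) (by exact_mod_cast hd₀),
    fun d => ?_⟩
  obtain ⟨y, hxy, hy⟩ := exists_isConj_wordLength_eq_minConjLength S (x ^ d)
  have hconj : IsConj (h ^ d) (y ^ d₀) := by
    refine (hxh.pow d).symm.trans ?_
    rw [← pow_mul, mul_comm, pow_mul]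
    exact hxy.pow d₀
  have hyd := le_wordLength_of_isConj hSsymm hS (c := d * ((wordLength S h : ℝ) - 8 * δ))
    (fun k => by have := hpow (d * k); rw [pow_mul] at this; push_cast at this; linarith) hconj
  have hyd₀ : (wordLength S (y ^ d₀) : ℝ) ≤ d₀ * wordLength S y := by
    exact_mod_cast wordLength_pow_le hS y d₀
  rw [← hy, div_mul_eq_mul_div, div_le_iff₀ (by exact_mod_cast hd₀)]
  linarith

end FourPointWith

/-- Let `G` be hyperbolic with finite symmetric generating set `S` and `C`
the conjugacy class of `x₀`. Exactly one of the following holds: either the set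
`{C^d : d ∈ ℕ}` of conjugacy classes is finite, or there is `K > 0` with `|C^d| ≥ K·d` for
every `d ≥ 1`. -/
theorem stmt12 {G : Type*} [Group G] (S : Set G) (hSfin : S.Finite)
    (hSsymm : ∀ s ∈ S, s⁻¹ ∈ S) (hSgen : Subgroup.closure S = ⊤)
    (hhyp : IsHyperbolicWith S) (x₀ : G) :
    Xor' (Set.Finite {D : Set G | ∃ d : ℕ, D = {y | IsConj (x₀ ^ d) y}})
      (∃ K : ℝ, 0 < K ∧ ∀ d : ℕ, 1 ≤ d →
        K * d ≤ (minConjLength S {y | IsConj (x₀ ^ d) y} : ℝ)) := by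
  obtain ⟨δ, hδ, hfp⟩ := hhyp
  have hS := submonoid_closure_eq_top_of_inv_mem hSsymm hSgen
  by_cases hlong : ∃ d₀, 0 < d₀ ∧ 8 * δ + 2 ≤ minConjLength S {y | IsConj (x₀ ^ d₀) y}
  · obtain ⟨d₀, hd₀, hlen⟩ := hlong
    obtain ⟨K, hK, hlin⟩ := hfp.exists_pos_mul_le_minConjLength_pow hSsymm hS hδ hd₀ hlen
    exact Or.inr ⟨⟨K, hK, fun d _ => hlin d⟩, fun hfin =>
      not_linear_minConjLength_pow_of_finite hfin ⟨K, hK, fun d _ => hlin d⟩⟩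
  · push Not at hlong
    have hbdd (d : ℕ) : minConjLength S {y | IsConj (x₀ ^ d) y} ≤ ⌈8 * δ + 2⌉₊ := by
      rcases Nat.eq_zero_or_pos d with rfl | hd
      · exact (minConjLength_le (IsConj.refl _)).trans (by simp [wordLength_one])
      · exact_mod_cast (hlong d hd).le.trans (Nat.le_ceil _)
    have hfin := finite_conjClasses_of_minConjLength_le hSfin hS hbdd
    exact Or.inl ⟨hfin, not_linear_minConjLength_pow_of_finite hfin⟩
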